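/- arXiv:1807.02718 — 2 statements merged into one kernel-verified Lean document; each statement's English description precedes it below -/
import Mathlib

section
/- Let a < b be real numbers, set A = (b − a)/2, δ = (a + b)/2, let P > 0, set α = P/(2π), let M be a positive even integer, and let c_m ∈ ℂ for −M/2 ≤ m ≤ M/2 − 1. Define F : ℝ → ℂ by F(ω) = Σ_{m=−M/2}^{M/2−1} c_m e^{i(2π/P)·m·(ω−δ)}. Then for every t ∈ ℝ such that αt − m ≠ 0 for every index m with −M/2 ≤ m ≤ M/2 − 1, one has ∫_a^b F(ω) e^{−iωt} dω = e^{−iδt} · Σ_{m=−M/2}^{M/2−1} c_m · (P/(π(αt − m))) · sin(π·(2A/P)·(αt − m)). -/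
/-!
Multiplied by the kernel, the mode of frequency `k = 2πm/P` becomes the single exponential
`e^{-ikδ} e^{i(k-t)ω}`, whose integral over the interval `[δ - A, δ + A]` centred at `δ` is
`e^{i(k-t)δ} · 2 sin(A(k-t))/(k-t)`. Since `k - t = -(2π/P)(αt - m)`, this is the sinc term.
-/

open Complex

lemma integral_cexp_I_mul_centered (δ A u : ℝ) (hu : u ≠ 0) :
    ∫ x in (δ - A)..(δ + A), cexp (I * u * x) =
      cexp (I * u * δ) * ((2 * Real.sin (A * u) / u : ℝ) : ℂ) := by
  have hIu : I * u ≠ 0 := mul_ne_zero I_ne_zero (ofReal_ne_zero.2 hu)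
  rw [integral_exp_mul_complex hIu]
  push_cast
  rw [two_sin, show I * u * (δ + A) = I * u * δ + A * u * I by ring,
    show I * u * (δ - A) = I * u * δ + -(A * u) * I by ring, exp_add, exp_add]
  field_simp
  rw [I_sq]
  ring

lemma integral_cexp_mode_mul_cexp_neg (δ A k t : ℝ) (hkt : k - t ≠ 0) :
    ∫ ω in (δ - A)..(δ + A), cexp (I * (k * (ω - δ) : ℝ)) * cexp (-(I * (ω * t : ℝ))) =
      cexp (-(I * (δ * t : ℝ))) * ((2 * Real.sin (A * (k - t)) / (k - t) : ℝ) : ℂ) := by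
  have hsplit : ∀ ω : ℝ, cexp (I * (k * (ω - δ) : ℝ)) * cexp (-(I * (ω * t : ℝ))) =
      cexp (-(I * (k * δ : ℝ))) * cexp (I * (k - t : ℝ) * ω) := by
    intro ω
    rw [← exp_add, ← exp_add]
    push_cast
    ring_nf
  simp_rw [hsplit]
  rw [intervalIntegral.integral_const_mul, integral_cexp_I_mul_centered δ A _ hkt, ← mul_assoc,
    ← exp_add]
  push_cast
  ring_nf

lemma two_pi_div_mul_sub_eq (P t m : ℝ) (hP : P ≠ 0) :
    2 * Real.pi / P * m - t = -(2 * Real.pi / P) * (P / (2 * Real.pi) * t - m) := by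
  field_simp
  ring

lemma two_mul_sin_div_eq (P A t m : ℝ) (hP : P ≠ 0) :
    2 * Real.sin (A * (2 * Real.pi / P * m - t)) / (2 * Real.pi / P * m - t) =
      P / (Real.pi * (P / (2 * Real.pi) * t - m)) *
        Real.sin (Real.pi * (2 * A / P) * (P / (2 * Real.pi) * t - m)) := by
  rw [two_pi_div_mul_sub_eq P t m hP, show A * (-(2 * Real.pi / P) * (P / (2 * Real.pi) * t - m)) =
      -(Real.pi * (2 * A / P) * (P / (2 * Real.pi) * t - m)) by ring, Real.sin_neg]
  field_simp

theorem stmt_9_general (a b : ℝ) (A δ P α : ℝ)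
    (hA : A = (b - a) / 2) (hδ : δ = (a + b) / 2) (hP : 0 < P)
    (hα : α = P / (2 * Real.pi))
    (M : ℕ) (c : ℤ → ℂ)
    (F : ℝ → ℂ)
    (hF : ∀ ω : ℝ, F ω = ∑ m ∈ Finset.Icc (-(M : ℤ) / 2) ((M : ℤ) / 2 - 1),
      c m * Complex.exp (Complex.I * ((2 * Real.pi / P) * (m : ℝ) * (ω - δ) : ℝ)))
    (t : ℝ)
    (ht : ∀ m ∈ Finset.Icc (-(M : ℤ) / 2) ((M : ℤ) / 2 - 1), α * t - (m : ℝ) ≠ 0) :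
    ∫ ω in a..b, F ω * Complex.exp (-(Complex.I * (ω * t : ℝ))) =
      Complex.exp (-(Complex.I * (δ * t : ℝ))) *
        ∑ m ∈ Finset.Icc (-(M : ℤ) / 2) ((M : ℤ) / 2 - 1),
          c m * (((P / (Real.pi * (α * t - (m : ℝ)))) *
            Real.sin (Real.pi * (2 * A / P) * (α * t - (m : ℝ))) : ℝ) : ℂ) := by
  obtain rfl : a = δ - A := by linarith
  obtain rfl : b = δ + A := by linarith
  subst hα
  simp_rw [hF, Finset.sum_mul]
  rw [intervalIntegral.integral_finsetSum
    fun m _ => (by fun_prop : Continuous _).intervalIntegrable _ _, Finset.mul_sum]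
  refine Finset.sum_congr rfl fun m hm => ?_
  have hkt : 2 * Real.pi / P * m - t ≠ 0 := by
    rw [two_pi_div_mul_sub_eq P t m hP.ne']
    exact mul_ne_zero (by simp [hP.ne', Real.pi_ne_zero]) (ht m hm)
  simp_rw [mul_assoc (c m)]
  rw [intervalIntegral.integral_const_mul, integral_cexp_mode_mul_cexp_neg δ A _ t hkt,
    two_mul_sin_div_eq P A t m hP.ne']
  ring

/-- exact term-by-term integration of a trigonometric polynomial of
period P against the oscillatory Fourier kernel on [a,b] yields the sinc-kernel sum. -/
theorem stmt_9 (a b : ℝ) (hab : a < b) (A δ P α : ℝ)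
    (hA : A = (b - a) / 2) (hδ : δ = (a + b) / 2) (hP : 0 < P)
    (hα : α = P / (2 * Real.pi))
    (M : ℕ) (hM : 0 < M) (hMeven : Even M) (c : ℤ → ℂ)
    (F : ℝ → ℂ)
    (hF : ∀ ω : ℝ, F ω = ∑ m ∈ Finset.Icc (-(M : ℤ) / 2) ((M : ℤ) / 2 - 1),
      c m * Complex.exp (Complex.I * ((2 * Real.pi / P) * (m : ℝ) * (ω - δ) : ℝ)))
    (t : ℝ)
    (ht : ∀ m ∈ Finset.Icc (-(M : ℤ) / 2) ((M : ℤ) / 2 - 1), α * t - (m : ℝ) ≠ 0) :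
    ∫ ω in a..b, F ω * Complex.exp (-(Complex.I * (ω * t : ℝ))) =
      Complex.exp (-(Complex.I * (δ * t : ℝ))) *
        ∑ m ∈ Finset.Icc (-(M : ℤ) / 2) ((M : ℤ) / 2 - 1),
          c m * (((P / (Real.pi * (α * t - (m : ℝ)))) *
            Real.sin (Real.pi * (2 * A / P) * (α * t - (m : ℝ))) : ℝ) : ℂ) :=
  stmt_9_general a b A δ P α hA hδ hP hα M c F hF t ht
end

section
/- Let a < b be real numbers, set A = (b − a)/2, δ = (a + b)/2, let P > 0, set α = P/(2π), let M be a positive even integer, let c_m ∈ ℂ for −M/2 ≤ m ≤ M/2 − 1, and let ε ≥ 0. Let F : ℝ → ℂ be integrable on [a,b] and suppose that |F(ω) − Σ_{m=−M/2}^{M/2−1} c_m e^{i(2π/P)·m·(ω−δ)}| ≤ ε for all ω ∈ [a,b]. Then for every t ∈ ℝ such that αt − m ≠ 0 for all indices m in the sum, |∫_a^b F(ω) e^{−iωt} dω − e^{−iδt} Σ_{m=−M/2}^{M/2−1} c_m (P/(π(αt − m))) sin(π(2A/P)(αt − m))| ≤ 2Aε. In particular the quadrature error is bounded by (b−a)·ε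 uniformly over all evaluation times t ∈ ℝ. -/
lemma int_exp (a b δ A θ : ℝ) (hA : A = (b - a) / 2) (hδ : δ = (a + b) / 2) (hθ : θ ≠ 0) :
    (∫ ω in a..b, Complex.exp (Complex.I * ((θ * (ω - δ) : ℝ)))) =
      ((2 * Real.sin (θ * A)) / θ : ℝ) := by
  have hc : (Complex.I * θ) ≠ 0 := by
    simp [Complex.I_ne_zero, hθ]
  have h1 : ∀ ω : ℝ, Complex.exp (Complex.I * ((θ * (ω - δ) : ℝ))) =
      Complex.exp (-(Complex.I * θ * δ)) * Complex.exp ((Complex.I * θ) * ω) := by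
    intro ω
    rw [← Complex.exp_add]
    push_cast
    ring_nf
  simp_rw [h1]
  rw [intervalIntegral.integral_const_mul, integral_exp_mul_complex hc]
  have hbδ : (b : ℂ) - δ = (A : ℂ) := by push_cast [hA, hδ]; ring
  have haδ : (a : ℂ) - δ = -(A : ℂ) := by push_cast [hA, hδ]; ring
  have key : Complex.exp (-(Complex.I * θ * δ)) * (Complex.exp (Complex.I * θ * b) - Complex.exp (Complex.I * θ * a))
      = Complex.exp (Complex.I * θ * (b - δ)) - Complex.exp (Complex.I * θ * (a - δ)) := by
    rw [mul_sub, ← Complex.exp_add, ← Complex.exp_add]; ring_nf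
  rw [← mul_div_assoc, key, hbδ, haδ]
  have e1 : Complex.I * θ * A = (θ * A : ℂ) * Complex.I := by ring
  have e2 : Complex.I * θ * (-(A:ℂ)) = (-(θ * A) : ℂ) * Complex.I := by ring
  rw [e1, e2, Complex.exp_mul_I, Complex.exp_mul_I, Complex.cos_neg, Complex.sin_neg]
  have hθC : (θ : ℂ) ≠ 0 := by exact_mod_cast hθ
  push_cast
  field_simp
  ring_nf

/-- if a trigonometric polynomial of period P approximates F on [a,b]
uniformly to within ε, then the sinc-kernel quadrature approximates the oscillatory
integral ∫_a^b F(ω)e^{−iωt} dω to within 2Aε, uniformly over all times t. -/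
theorem stmt_10 (a b : ℝ) (hab : a < b) (A δ P α : ℝ)
    (hA : A = (b - a) / 2) (hδ : δ = (a + b) / 2) (hP : 0 < P)
    (hα : α = P / (2 * Real.pi))
    (M : ℕ) (hM : 0 < M) (hMeven : Even M) (c : ℤ → ℂ)
    (ε : ℝ) (hε : 0 ≤ ε)
    (F : ℝ → ℂ)
    (hFint : IntervalIntegrable F MeasureTheory.volume a b)
    (hFapprox : ∀ ω ∈ Set.Icc a b,
      ‖F ω - ∑ m ∈ Finset.Icc (-(M : ℤ) / 2) ((M : ℤ) / 2 - 1),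
        c m * Complex.exp (Complex.I * ((2 * Real.pi / P) * (m : ℝ) * (ω - δ) : ℝ))‖ ≤ ε) :
    ∀ t : ℝ, (∀ m ∈ Finset.Icc (-(M : ℤ) / 2) ((M : ℤ) / 2 - 1), α * t - (m : ℝ) ≠ 0) →
      ‖(∫ ω in a..b, F ω * Complex.exp (-(Complex.I * (ω * t : ℝ)))) -
        Complex.exp (-(Complex.I * (δ * t : ℝ))) *
          ∑ m ∈ Finset.Icc (-(M : ℤ) / 2) ((M : ℤ) / 2 - 1),
            c m * (((P / (Real.pi * (α * t - (m : ℝ)))) *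
              Real.sin (Real.pi * (2 * A / P) * (α * t - (m : ℝ))) : ℝ) : ℂ)‖ ≤
      2 * A * ε := by
  intro t ht
  have hπ : (0:ℝ) < Real.pi := Real.pi_pos
  have hP' : P ≠ 0 := ne_of_gt hP
  have hπ' : Real.pi ≠ 0 := ne_of_gt hπ
  set S : Finset ℤ := Finset.Icc (-(M : ℤ) / 2) ((M : ℤ) / 2 - 1) with hS
  set G : ℝ → ℂ := fun ω => ∑ m ∈ S,
      c m * Complex.exp (Complex.I * ((2 * Real.pi / P) * (m : ℝ) * (ω - δ) : ℝ)) with hG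
  -- exact integration of the trig polynomial
  have hexact : (∫ ω in a..b, G ω * Complex.exp (-(Complex.I * (ω * t : ℝ)))) =
      Complex.exp (-(Complex.I * (δ * t : ℝ))) *
        ∑ m ∈ S, c m * (((P / (Real.pi * (α * t - (m : ℝ)))) *
          Real.sin (Real.pi * (2 * A / P) * (α * t - (m : ℝ))) : ℝ) : ℂ) := by
    have hsplit : ∀ ω : ℝ, G ω * Complex.exp (-(Complex.I * (ω * t : ℝ))) =
        ∑ m ∈ S, c m * Complex.exp (Complex.I * ((2 * Real.pi / P) * (m : ℝ) * (ω - δ) : ℝ))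
          * Complex.exp (-(Complex.I * (ω * t : ℝ))) := by
      intro ω; rw [hG]; rw [Finset.sum_mul]
    simp_rw [hsplit]
    rw [intervalIntegral.integral_finset_sum]
    · rw [Finset.mul_sum]
      apply Finset.sum_congr rfl
      intro m hm
      have hx : α * t - (m : ℝ) ≠ 0 := ht m hm
      set θ : ℝ := 2 * Real.pi / P * (m : ℝ) - t with hθdef
      have hθx : θ = -(2 * Real.pi / P * (α * t - (m : ℝ))) := by
        rw [hθdef, hα]; field_simp; ring
      have hθ : θ ≠ 0 := by
        rw [hθx]
        simp only [neg_ne_zero]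
        exact mul_ne_zero (by positivity) hx
      have hintegrand : ∀ ω : ℝ,
          c m * Complex.exp (Complex.I * ((2 * Real.pi / P) * (m : ℝ) * (ω - δ) : ℝ))
            * Complex.exp (-(Complex.I * (ω * t : ℝ))) =
          c m * Complex.exp (-(Complex.I * (δ * t : ℝ))) *
            Complex.exp (Complex.I * ((θ * (ω - δ) : ℝ))) := by
        intro ω
        have hE : Complex.exp (Complex.I * ((2 * Real.pi / P) * (m : ℝ) * (ω - δ) : ℝ)) *
            Complex.exp (-(Complex.I * (ω * t : ℝ))) =
            Complex.exp (-(Complex.I * (δ * t : ℝ))) *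
              Complex.exp (Complex.I * ((θ * (ω - δ) : ℝ))) := by
          rw [← Complex.exp_add, ← Complex.exp_add]
          congr 1
          rw [hθdef]
          push_cast
          ring
        rw [mul_assoc, hE, ← mul_assoc]
      simp_rw [hintegrand]
      rw [intervalIntegral.integral_const_mul, int_exp a b δ A θ hA hδ hθ]
      have hreal : (2 * Real.sin (θ * A)) / θ =
          (P / (Real.pi * (α * t - (m : ℝ)))) *
            Real.sin (Real.pi * (2 * A / P) * (α * t - (m : ℝ))) := by
        have harg : Real.pi * (2 * A / P) * (α * t - (m : ℝ)) = -(θ * A) := by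
          rw [hθx]; field_simp
        rw [harg, Real.sin_neg, hθx]
        field_simp
      rw [hreal]; ring
    · intro m hm
      apply Continuous.intervalIntegrable
      fun_prop
  -- integrability
  have hcont : Continuous fun ω : ℝ => G ω * Complex.exp (-(Complex.I * (ω * t : ℝ))) := by
    rw [hG]; fun_prop
  have hGe : IntervalIntegrable (fun ω : ℝ => G ω * Complex.exp (-(Complex.I * (ω * t : ℝ))))
      MeasureTheory.volume a b := hcont.intervalIntegrable a b
  have hFe : IntervalIntegrable (fun ω : ℝ => F ω * Complex.exp (-(Complex.I * (ω * t : ℝ))))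
      MeasureTheory.volume a b := by
    apply hFint.mul_continuousOn
    apply Continuous.continuousOn
    fun_prop
  rw [← hexact, ← intervalIntegral.integral_sub hFe hGe]
  have hbound : ∀ ω ∈ Set.uIoc a b,
      ‖F ω * Complex.exp (-(Complex.I * (ω * t : ℝ))) -
        G ω * Complex.exp (-(Complex.I * (ω * t : ℝ)))‖ ≤ ε := by
    intro ω hω
    have hω' : ω ∈ Set.Icc a b := by
      rw [Set.uIoc_of_le hab.le] at hω
      exact Set.Ioc_subset_Icc_self hω
    have : F ω * Complex.exp (-(Complex.I * (ω * t : ℝ))) -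
        G ω * Complex.exp (-(Complex.I * (ω * t : ℝ))) =
        (F ω - G ω) * Complex.exp (-(Complex.I * (ω * t : ℝ))) := by ring
    rw [this, norm_mul]
    have hnorm : ‖Complex.exp (-(Complex.I * (ω * t : ℝ)))‖ = 1 := by
      rw [show -(Complex.I * ((ω * t : ℝ) : ℂ)) = ((-(ω*t) : ℝ) : ℂ) * Complex.I by push_cast; ring]
      exact Complex.norm_exp_ofReal_mul_I _
    rw [hnorm, mul_one]
    exact hFapprox ω hω'
  calc ‖∫ ω in a..b, (F ω * Complex.exp (-(Complex.I * (ω * t : ℝ))) -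
        G ω * Complex.exp (-(Complex.I * (ω * t : ℝ))))‖
      ≤ ε * |b - a| := intervalIntegral.norm_integral_le_of_norm_le_const hbound
    _ = 2 * A * ε := by rw [abs_of_pos (by linarith), hA]; ring
end
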